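/- Let q₁,…,q_K be probability densities, let N₁,…,N_K be positive integers with N = ∑ₖ Nₖ, and let Φ = ∑ₖ (Nₖ/N) qₖ be the mixture density. Let p be a target density with p ≪ Φ and D₂(p‖Φ) < ∞, let R be measurable with |R| ≤ Rmax, γ ∈ [0,1), δ ∈ (0,1). The multiple importance sampling estimator Ĵ_MIS = (1/(1−γ)) ∑ₖ ∑_{n=1}^{Nₖ} [p(x_{n,k}) / (∑ⱼ Nⱼ qⱼ(x_{n,k}))] R(x_{n,k}), with x_{n,k} i.i.d. from qₖ, satisfies with probability at least 1−δ: |J − Ĵ_MIS| ≤ (Rmax/(1−γ)) √(D₂(p‖Φ)/(δN)), where J = (1/(1−γ)) E_{x∼p}[R(x)]. -/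
import Mathlib


open Finset



lemma my_sum_prod_pi {I X : Type*} [Fintype I] [Fintype X] [DecidableEq I] (F : I → X → ℝ) :
    ∑ xs : I → X, ∏ i, F i (xs i) = ∏ i, ∑ x, F i x := by
  rw [Finset.prod_univ_sum, Fintype.piFinset_univ]

lemma my_mass_one {I X : Type*} [Fintype I] [Fintype X] [DecidableEq I]
    (Q : I → X → ℝ) (hq1 : ∀ i, ∑ x, Q i x = 1) :
    ∑ xs : I → X, ∏ i, Q i (xs i) = 1 := by
  rw [my_sum_prod_pi]
  simp [hq1]

lemma my_prod_two {I : Type*} [Fintype I] [DecidableEq I] {i₀ i₁ : I} (hne : i₀ ≠ i₁)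
    (a b : I → ℝ) :
    ∏ i, (if i = i₀ then a i else if i = i₁ then b i else 1) = a i₀ * b i₁ := by
  rw [← Finset.prod_subset (Finset.subset_univ ({i₀, i₁} : Finset I))
      (by
        intro i _ hi
        simp only [Finset.mem_insert, Finset.mem_singleton, not_or] at hi
        simp [hi.1, hi.2]),
    Finset.prod_pair hne]
  simp [hne, Ne.symm hne]

lemma my_expect_single {I X : Type*} [Fintype I] [Fintype X] [DecidableEq I]
    (Q : I → X → ℝ) (hq1 : ∀ i, ∑ x, Q i x = 1) (i₀ : I) (g : X → ℝ) :
    ∑ xs : I → X, (∏ i, Q i (xs i)) * g (xs i₀) = ∑ x, Q i₀ x * g x := by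
  have h : ∀ xs : I → X, (∏ i, Q i (xs i)) * g (xs i₀)
      = ∏ i, (Q i (xs i) * (if i = i₀ then g (xs i) else 1)) := by
    intro xs
    rw [Finset.prod_mul_distrib]
    congr 1
    simp
  simp_rw [h]
  rw [my_sum_prod_pi (fun i x => Q i x * if i = i₀ then g x else 1)]
  calc ∏ i, ∑ x, Q i x * (if i = i₀ then g x else 1)
      = ∏ i, (if i = i₀ then ∑ x, Q i₀ x * g x else 1) := by
        refine Finset.prod_congr rfl fun i _ => ?_
        by_cases h : i = i₀ <;> simp [h, hq1 i]
    _ = ∑ x, Q i₀ x * g x := by simp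

lemma my_expect_pair {I X : Type*} [Fintype I] [Fintype X] [DecidableEq I]
    (Q : I → X → ℝ) (hq1 : ∀ i, ∑ x, Q i x = 1) {i₀ i₁ : I} (hne : i₀ ≠ i₁)
    (g h : X → ℝ) :
    ∑ xs : I → X, (∏ i, Q i (xs i)) * (g (xs i₀) * h (xs i₁))
      = (∑ x, Q i₀ x * g x) * (∑ x, Q i₁ x * h x) := by
  have key : ∀ xs : I → X, (∏ i, Q i (xs i)) * (g (xs i₀) * h (xs i₁))
      = ∏ i, (Q i (xs i) * (if i = i₀ then g (xs i) else if i = i₁ then h (xs i) else 1)) := by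
    intro xs
    rw [Finset.prod_mul_distrib, my_prod_two hne]
  simp_rw [key]
  rw [my_sum_prod_pi (fun i x => Q i x * if i = i₀ then g x else if i = i₁ then h x else 1)]
  calc ∏ i, ∑ x, Q i x * (if i = i₀ then g x else if i = i₁ then h x else 1)
      = ∏ i, (if i = i₀ then ∑ x, Q i₀ x * g x else if i = i₁ then ∑ x, Q i₁ x * h x else 1) := by
        refine Finset.prod_congr rfl fun i _ => ?_
        by_cases h0 : i = i₀
        · simp [h0]
        · by_cases h1 : i = i₁ <;> simp [h0, h1, hq1 i, Ne.symm hne]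
    _ = (∑ x, Q i₀ x * g x) * (∑ x, Q i₁ x * h x) := my_prod_two hne _ _

lemma my_indep_var {I X : Type*} [Fintype I] [Fintype X] [DecidableEq I]
    (Q : I → X → ℝ) (hq1 : ∀ i, ∑ x, Q i x = 1) (f : X → ℝ) :
    ∑ xs : I → X, (∏ i, Q i (xs i)) * (∑ i, f (xs i) - ∑ i, ∑ x, Q i x * f x) ^ 2
      = ∑ i, ∑ x, Q i x * (f x - ∑ y, Q i y * f y) ^ 2 := by
  set μ : I → ℝ := fun i => ∑ x, Q i x * f x with hμ
  have hg0 : ∀ i, ∑ x, Q i x * (f x - μ i) = 0 := by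
    intro i
    have : ∀ x, Q i x * (f x - μ i) = Q i x * f x - μ i * Q i x := by intro x; ring
    rw [Finset.sum_congr rfl fun x _ => this x, Finset.sum_sub_distrib, ← Finset.mul_sum,
      hq1 i, mul_one]
    simp [μ]
  have key : ∀ xs : I → X,
      (∏ i, Q i (xs i)) * (∑ i, f (xs i) - ∑ i, μ i) ^ 2
        = ∑ i, ∑ j, (∏ i', Q i' (xs i')) * ((f (xs i) - μ i) * (f (xs j) - μ j)) := by
    intro xs
    rw [← Finset.sum_sub_distrib, sq, Finset.sum_mul_sum]
    rw [Finset.mul_sum]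
    refine Finset.sum_congr rfl fun i _ => ?_
    rw [Finset.mul_sum]
  simp_rw [key]
  rw [Finset.sum_comm]
  refine Finset.sum_congr rfl fun i _ => ?_
  rw [Finset.sum_comm]
  rw [Finset.sum_eq_single i]
  · have h1 := my_expect_single Q hq1 i (fun x => (f x - μ i) ^ 2)
    have h2 : ∀ xs : I → X, (∏ i', Q i' (xs i')) * ((f (xs i) - μ i) * (f (xs i) - μ i))
        = (∏ i', Q i' (xs i')) * (fun x => (f x - μ i) ^ 2) (xs i) := by
      intro xs; simp [sq]
    rw [Finset.sum_congr rfl fun xs _ => h2 xs, h1]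
  · intro j _ hj
    rw [my_expect_pair Q hq1 (Ne.symm hj) (fun x => f x - μ i) (fun x => f x - μ j),
      hg0 i, zero_mul]
  · intro h; exact absurd (Finset.mem_univ i) h

lemma my_cheby {Ω : Type*} [Fintype Ω] (w : Ω → ℝ) (hw : ∀ o, 0 ≤ w o) (hw1 : ∑ o, w o = 1)
    (Y : Ω → ℝ) (M t δ : ℝ) (ht : 0 < t) (P : Ω → Prop) [DecidablePred P]
    (hP : ∀ o, |M - Y o| ≤ t → P o)
    (hvar : ∑ o, w o * (Y o - M) ^ 2 ≤ δ * t ^ 2) :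
    1 - δ ≤ ∑ o ∈ univ.filter P, w o := by
  classical
  set s := univ.filter (fun o => |M - Y o| ≤ t) with hs
  have hsub : s ⊆ univ.filter P := by
    intro o ho
    rw [Finset.mem_filter] at ho ⊢
    exact ⟨ho.1, hP o ho.2⟩
  have hsplit : ∑ o ∈ s, w o + ∑ o ∈ sᶜ, w o = 1 := by
    rw [Finset.sum_add_sum_compl]; exact hw1
  have hbad : ∑ o ∈ sᶜ, w o * t ^ 2 ≤ δ * t ^ 2 := by
    refine le_trans (Finset.sum_le_sum ?_) (le_trans (Finset.sum_le_sum_of_subset_of_nonneg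
      (Finset.subset_univ _) (fun o _ _ => mul_nonneg (hw o) (sq_nonneg _))) hvar)
    intro o ho
    refine mul_le_mul_of_nonneg_left ?_ (hw o)
    have hlt : t < |M - Y o| := by
      rw [Finset.mem_compl, hs, Finset.mem_filter] at ho
      push_neg at ho
      exact ho (Finset.mem_univ o)
    have : t ^ 2 ≤ |M - Y o| ^ 2 := by nlinarith [abs_nonneg (M - Y o)]
    calc t ^ 2 ≤ |M - Y o| ^ 2 := this
      _ = (Y o - M) ^ 2 := by rw [abs_sub_comm, sq_abs]
  have ht2 : (0:ℝ) < t ^ 2 := by positivity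
  rw [← Finset.sum_mul] at hbad
  have hbad2 : ∑ o ∈ sᶜ, w o ≤ δ := le_of_mul_le_mul_right hbad ht2
  have hmono : ∑ o ∈ s, w o ≤ ∑ o ∈ univ.filter P, w o :=
    Finset.sum_le_sum_of_subset_of_nonneg hsub (fun o _ _ => hw o)
  linarith

lemma my_curry_sum {K : ℕ} {N : Fin K → ℕ} {X : Type*} [Fintype X]
    (F : ((k : Fin K) → Fin (N k) → X) → ℝ) :
    ∑ xs : (k : Fin K) → Fin (N k) → X, F xs
      = ∑ ys : ((k : Fin K) × Fin (N k)) → X, F (fun k n => ys ⟨k, n⟩) :=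
  (Equiv.sum_comp (Equiv.piCurry (β := fun k : Fin K => Fin (N k)) fun _ _ => X) F).symm

lemma my_curry_prod {K : ℕ} {N : Fin K → ℕ} {X : Type*} [Fintype X] (q : Fin K → X → ℝ)
    (ys : ((k : Fin K) × Fin (N k)) → X) :
    (∏ k, ∏ n, q k (ys ⟨k, n⟩)) = ∏ i : (k : Fin K) × Fin (N k), q i.1 (ys i) := by
  rw [← Finset.univ_sigma_univ, Finset.prod_sigma]

lemma my_curry_sum2 {K : ℕ} {N : Fin K → ℕ} {X : Type*} [Fintype X] (f : X → ℝ)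
    (ys : ((k : Fin K) × Fin (N k)) → X) :
    (∑ k, ∑ n, f (ys ⟨k, n⟩)) = ∑ i : (k : Fin K) × Fin (N k), f (ys i) := by
  rw [← Finset.univ_sigma_univ, Finset.sum_sigma]

lemma my_sigma_card {K : ℕ} {N : Fin K → ℕ} (G : Fin K → ℝ) :
    ∑ i : (k : Fin K) × Fin (N k), G i.1 = ∑ k, (N k : ℝ) * G k := by
  rw [← Finset.univ_sigma_univ, Finset.sum_sigma]
  refine Finset.sum_congr rfl fun k _ => ?_
  calc ∑ s : Fin (N k), G (⟨k, s⟩ : (k : Fin K) × Fin (N k)).1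
      = ∑ _s : Fin (N k), G k := rfl
    _ = (N k : ℝ) * G k := by
        rw [Finset.sum_const, Finset.card_univ, Fintype.card_fin, nsmul_eq_mul]
lemma my_pi_cheby {I X : Type*} [Fintype I] [Fintype X] [DecidableEq I]
    (Q : I → X → ℝ) (hq0 : ∀ i x, 0 ≤ Q i x) (hq1 : ∀ i, ∑ x, Q i x = 1)
    (f : X → ℝ) (M t δ : ℝ) (ht : 0 < t) (P : (I → X) → Prop) [DecidablePred P]
    (hP : ∀ ys : I → X, |M - ∑ i, f (ys i)| ≤ t → P ys)
    (hmean : ∑ i, ∑ x, Q i x * f x = M)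
    (hvar : ∑ i, ∑ x, Q i x * (f x - ∑ y, Q i y * f y) ^ 2 ≤ δ * t ^ 2) :
    1 - δ ≤ ∑ ys ∈ univ.filter P, ∏ i, Q i (ys i) := by
  refine my_cheby _ (fun ys => Finset.prod_nonneg fun i _ => hq0 i (ys i)) (my_mass_one Q hq1)
    (fun ys => ∑ i, f (ys i)) M t δ ht P hP ?_
  rw [← hmean]
  exact le_trans (le_of_eq (my_indep_var Q hq1 f)) hvar


set_option maxHeartbeats 1600000 in
/-- High-probability evaluation error bound for the multiple importance sampling
(balance heuristic) estimator. -/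
theorem mis_evaluation_error {X : Type*} [Fintype X] (K : ℕ) (q : Fin K → X → ℝ)
    (N : Fin K → ℕ) (hN : ∀ k, 0 < N k)
    (hq0 : ∀ k x, 0 ≤ q k x) (hq1 : ∀ k, ∑ x, q k x = 1)
    (p R : X → ℝ)
    (hp0 : ∀ x, 0 ≤ p x) (hp1 : ∑ x, p x = 1)
    (hac : ∀ x, (∑ k, ((N k : ℝ) / (∑ j, (N j : ℝ))) * q k x) = 0 → p x = 0)
    (Rmax γ δ : ℝ) (hR : ∀ x, |R x| ≤ Rmax)
    (hγ : γ ∈ Set.Ico (0 : ℝ) 1) (hδ : δ ∈ Set.Ioo (0 : ℝ) 1) :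
    1 - δ ≤ ∑ xs ∈ Finset.univ.filter
        (fun xs : (k : Fin K) → Fin (N k) → X =>
          |(1 / (1 - γ)) * ∑ x, p x * R x -
              (1 / (1 - γ)) * ∑ k, ∑ n,
                (p (xs k n) / (∑ j, (N j : ℝ) * q j (xs k n))) * R (xs k n)| ≤
            Rmax / (1 - γ) *
              Real.sqrt ((∑ x, (∑ k, ((N k : ℝ) / (∑ j, (N j : ℝ))) * q k x) *
                  (p x / (∑ k, ((N k : ℝ) / (∑ j, (N j : ℝ))) * q k x)) ^ 2) /
                (δ * (∑ j, (N j : ℝ))))),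
      ∏ k, ∏ n, q k (xs k n) := by
  classical
  obtain ⟨hγ0, hγ1⟩ := hγ
  obtain ⟨hδ0, hδ1⟩ := hδ
  have hγpos : (0:ℝ) < 1 - γ := by linarith
  have hXne : Nonempty X := by
    by_contra h
    rw [not_nonempty_iff] at h
    rw [Finset.univ_eq_empty, Finset.sum_empty] at hp1
    norm_num at hp1
  have hRmax0 : (0:ℝ) ≤ Rmax := le_trans (abs_nonneg _) (hR (Classical.arbitrary X))
  have hKpos : 0 < K := by
    rcases Nat.eq_zero_or_pos K with h | h
    · exfalso
      subst h
      have hz : ∀ x, p x = 0 := fun x => hac x (by simp)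
      rw [Finset.sum_congr rfl fun x _ => hz x, Finset.sum_const, smul_zero] at hp1
      norm_num at hp1
    · exact h
  have hN0 : ∀ j : Fin K, (0:ℝ) ≤ (N j : ℝ) := fun j => Nat.cast_nonneg _
  have hNtpos : (0:ℝ) < ∑ j, (N j : ℝ) := by
    have h1 : (0:ℝ) < ((N ⟨0, hKpos⟩ : ℕ) : ℝ) := by exact_mod_cast hN _
    exact lt_of_lt_of_le h1 (Finset.single_le_sum (fun j _ => hN0 j) (Finset.mem_univ _))
  set Nt : ℝ := ∑ j, (N j : ℝ) with hNtdef
  have hNtne : Nt ≠ 0 := ne_of_gt hNtpos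
  set S : X → ℝ := fun x => ∑ j, (N j : ℝ) * q j x with hSdef
  have hS0 : ∀ x, 0 ≤ S x := fun x =>
    Finset.sum_nonneg fun j _ => mul_nonneg (hN0 j) (hq0 j x)
  have hΦeq : ∀ x, (∑ k, ((N k : ℝ) / Nt) * q k x) = S x / Nt := by
    intro x
    simp only [hSdef]
    rw [Finset.sum_div]
    exact Finset.sum_congr rfl fun k _ => by ring
  have hacS : ∀ x, S x = 0 → p x = 0 := fun x hx =>
    hac x (by rw [hΦeq x, hx, zero_div])
  set f : X → ℝ := fun x => p x / S x * R x with hfdef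
  set D : ℝ := ∑ x, (∑ k, ((N k : ℝ) / Nt) * q k x) *
      (p x / (∑ k, ((N k : ℝ) / Nt) * q k x)) ^ 2 with hDdef
  have hD0 : 0 ≤ D := by
    rw [hDdef]
    refine Finset.sum_nonneg fun x _ => mul_nonneg ?_ (sq_nonneg _)
    exact Finset.sum_nonneg fun k _ =>
      mul_nonneg (div_nonneg (hN0 k) hNtpos.le) (hq0 k x)
  have hSf : ∀ x, S x * f x = p x * R x := by
    intro x
    by_cases hx : S x = 0
    · simp [hfdef, hx, hacS x hx]
    · simp only [hfdef]
      field_simp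
  have hmean : ∑ i : (k : Fin K) × Fin (N k), ∑ x, q i.1 x * f x = ∑ x, p x * R x := by
    rw [my_sigma_card (fun k => ∑ x, q k x * f x)]
    simp_rw [Finset.mul_sum]
    rw [Finset.sum_comm]
    refine Finset.sum_congr rfl fun x _ => ?_
    calc ∑ k, (N k : ℝ) * (q k x * f x) = (∑ k, (N k : ℝ) * q k x) * f x := by
          rw [Finset.sum_mul]; exact Finset.sum_congr rfl fun k _ => by ring
      _ = S x * f x := by simp only [hSdef]
      _ = p x * R x := hSf x
  have hvar1 : ∀ k : Fin K, ∑ x, q k x * (f x - ∑ y, q k y * f y) ^ 2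
      ≤ ∑ x, q k x * f x ^ 2 := by
    intro k
    have hexp : ∀ x, q k x * (f x - ∑ y, q k y * f y) ^ 2
        = q k x * f x ^ 2 - 2 * (∑ y, q k y * f y) * (q k x * f x)
          + (∑ y, q k y * f y) ^ 2 * q k x := fun x => by ring
    rw [Finset.sum_congr rfl fun x _ => hexp x, Finset.sum_add_distrib,
      Finset.sum_sub_distrib, ← Finset.mul_sum, ← Finset.mul_sum, hq1 k, mul_one]
    nlinarith [sq_nonneg (∑ y, q k y * f y)]
  have hSf2 : ∀ x, S x * f x ^ 2
      ≤ Rmax ^ 2 * ((S x / Nt) * (p x / (S x / Nt)) ^ 2) / Nt := by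
    intro x
    by_cases hx : S x = 0
    · simp [hfdef, hx]
    · have hSpos : 0 < S x := lt_of_le_of_ne (hS0 x) (Ne.symm hx)
      have hR2 : R x ^ 2 ≤ Rmax ^ 2 := by
        have h1 := hR x
        have h2 := abs_nonneg (R x)
        nlinarith [sq_abs (R x)]
      have key : S x * f x ^ 2 = p x ^ 2 / S x * R x ^ 2 := by
        simp only [hfdef]
        field_simp
      have key2 : Rmax ^ 2 * ((S x / Nt) * (p x / (S x / Nt)) ^ 2) / Nt
          = p x ^ 2 / S x * Rmax ^ 2 := by
        field_simp
      rw [key, key2]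
      exact mul_le_mul_of_nonneg_left hR2 (by positivity)
  have hvar : ∑ i : (k : Fin K) × Fin (N k), ∑ x, q i.1 x * (f x - ∑ y, q i.1 y * f y) ^ 2
      ≤ Rmax ^ 2 * D / Nt := by
    calc ∑ i : (k : Fin K) × Fin (N k), ∑ x, q i.1 x * (f x - ∑ y, q i.1 y * f y) ^ 2
        = ∑ k, (N k : ℝ) * ∑ x, q k x * (f x - ∑ y, q k y * f y) ^ 2 :=
          my_sigma_card (fun k => ∑ x, q k x * (f x - ∑ y, q k y * f y) ^ 2)
      _ ≤ ∑ k, (N k : ℝ) * ∑ x, q k x * f x ^ 2 :=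
          Finset.sum_le_sum fun k _ => mul_le_mul_of_nonneg_left (hvar1 k) (hN0 k)
      _ = ∑ x, S x * f x ^ 2 := by
          simp_rw [Finset.mul_sum]
          rw [Finset.sum_comm]
          refine Finset.sum_congr rfl fun x _ => ?_
          calc ∑ k, (N k : ℝ) * (q k x * f x ^ 2)
              = (∑ k, (N k : ℝ) * q k x) * f x ^ 2 := by
                rw [Finset.sum_mul]; exact Finset.sum_congr rfl fun k _ => by ring
            _ = S x * f x ^ 2 := by simp only [hSdef]
      _ ≤ ∑ x, Rmax ^ 2 * ((S x / Nt) * (p x / (S x / Nt)) ^ 2) / Nt :=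
          Finset.sum_le_sum fun x _ => hSf2 x
      _ = Rmax ^ 2 * D / Nt := by
          rw [hDdef, Finset.mul_sum, Finset.sum_div]
          refine Finset.sum_congr rfl fun x _ => ?_
          rw [hΦeq x]
  rcases eq_or_lt_of_le hRmax0 with hR0 | hRpos
  · have hRz : ∀ x, R x = 0 := fun x =>
      abs_eq_zero.mp (le_antisymm (hR0 ▸ hR x) (abs_nonneg _))
    have hfilt : ∀ xs : (k : Fin K) → Fin (N k) → X,
        |(1 / (1 - γ)) * ∑ x, p x * R x -
            (1 / (1 - γ)) * ∑ k, ∑ n,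
              (p (xs k n) / (∑ j, (N j : ℝ) * q j (xs k n))) * R (xs k n)| ≤
          Rmax / (1 - γ) * Real.sqrt (D / (δ * Nt)) := by
      intro xs
      simp [hRz, ← hR0]
    rw [Finset.filter_true_of_mem fun xs _ => hfilt xs]
    have hone : ∑ xs : (k : Fin K) → Fin (N k) → X, ∏ k, ∏ n, q k (xs k n) = 1 := by
      rw [my_curry_sum (fun xs : (k : Fin K) → Fin (N k) → X => ∏ k, ∏ n, q k (xs k n))]
      simp_rw [my_curry_prod q]
      exact my_mass_one _ (fun i => hq1 i.1)
    rw [hone]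
    linarith
  · have hDpos : 0 < D := by
      obtain ⟨x0, hx0⟩ : ∃ x, 0 < p x := by
        by_contra h
        push_neg at h
        have hz : ∀ x, p x = 0 := fun x => le_antisymm (h x) (hp0 x)
        rw [Finset.sum_congr rfl fun x _ => hz x, Finset.sum_const, smul_zero] at hp1
        norm_num at hp1
      have hΦpos : 0 < ∑ k, ((N k : ℝ) / Nt) * q k x0 := by
        rcases lt_or_eq_of_le (Finset.sum_nonneg fun k _ =>
            mul_nonneg (div_nonneg (hN0 k) hNtpos.le) (hq0 k x0)) with h | h
        · exact h
        · exact absurd (hac x0 h.symm) (ne_of_gt hx0)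
      have hterm : 0 < (∑ k, ((N k : ℝ) / Nt) * q k x0) *
          (p x0 / (∑ k, ((N k : ℝ) / Nt) * q k x0)) ^ 2 := by
        have hq : 0 < p x0 / (∑ k, ((N k : ℝ) / Nt) * q k x0) := div_pos hx0 hΦpos
        positivity
      rw [hDdef]
      refine lt_of_lt_of_le hterm (Finset.single_le_sum
        (f := fun x => (∑ k, ((N k : ℝ) / Nt) * q k x) *
          (p x / (∑ k, ((N k : ℝ) / Nt) * q k x)) ^ 2) (fun x _ => mul_nonneg
        (Finset.sum_nonneg fun k _ => mul_nonneg (div_nonneg (hN0 k) hNtpos.le) (hq0 k x))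
        (sq_nonneg _)) (Finset.mem_univ x0))
    have htpos : 0 < Rmax * Real.sqrt (D / (δ * Nt)) := by
      apply mul_pos hRpos
      apply Real.sqrt_pos.mpr
      positivity
    rw [Finset.sum_filter]
    rw [my_curry_sum]
    simp_rw [my_curry_prod q]
    rw [← Finset.sum_filter]
    refine my_pi_cheby (I := (k : Fin K) × Fin (N k)) (fun i => q i.1)
      (fun i x => hq0 i.1 x) (fun i => hq1 i.1) f
      (∑ x, p x * R x) (Rmax * Real.sqrt (D / (δ * Nt))) δ htpos _ ?_ hmean ?_
    · intro ys hys
      show |(1 / (1 - γ)) * ∑ x, p x * R x -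
              (1 / (1 - γ)) * ∑ k, ∑ n,
                (p (ys ⟨k, n⟩) / (∑ j, (N j : ℝ) * q j (ys ⟨k, n⟩))) * R (ys ⟨k, n⟩)| ≤
            Rmax / (1 - γ) * Real.sqrt (D / (δ * Nt))
      have hEq : (∑ k, ∑ n, (p (ys ⟨k, n⟩) / (∑ j, (N j : ℝ) * q j (ys ⟨k, n⟩))) * R (ys ⟨k, n⟩))
          = ∑ i, f (ys i) := by
        rw [← my_curry_sum2 f ys]
      rw [hEq, ← mul_sub, abs_mul,
        abs_of_pos (by positivity : (0:ℝ) < 1 / (1 - γ))]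
      calc (1 / (1 - γ)) * |(∑ x, p x * R x) - ∑ i, f (ys i)|
          ≤ (1 / (1 - γ)) * (Rmax * Real.sqrt (D / (δ * Nt))) :=
            mul_le_mul_of_nonneg_left hys (by positivity)
        _ = Rmax / (1 - γ) * Real.sqrt (D / (δ * Nt)) := by ring
    · refine le_trans hvar (le_of_eq ?_)
      rw [mul_pow, Real.sq_sqrt (by positivity : (0:ℝ) ≤ D / (δ * Nt))]
      field_simp
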